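/- arXiv:1810.07863 — 2 statements merged into one kernel-verified Lean document; each statement's English description precedes it below -/
import Mathlib

section
/- For any general source X and any ε, δ ∈ [0,1) satisfying ε + δ < 1, it holds that G_{ε,δ}(X) = inf{ R : lim_{ν↓0} F(ε+ν, R) ≤ δ }. -/
open Filter MeasureTheory

namespace NY

/-- A probability distribution on a set, given by its point mass function. -/
structure Dist (α : Type*) where
  p : α → ℝ
  nonneg : ∀ x, 0 ≤ p x
  hasSum : HasSum p 1

/-- The probability of a set under a distribution. -/
noncomputable def Dist.pr {α : Type*} (P : Dist α) (A : Set α) : ℝ := ∑' x : A, P.p x.1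

/-- 𝒰* : nonempty finite strings over the code alphabet 𝒰 = {1,…,K}. -/
abbrev Word (K : ℕ) := {u : List (Fin K) // u ≠ []}

/-- Length of a string, as a real number. -/
noncomputable def wlen {K : ℕ} (u : Word K) : ℝ := u.1.length

/-- Error probability of a variable-length code (φ, ψ). -/
noncomputable def errP {α : Type*} {K : ℕ} (P : Dist α) (φ : α → Word K) (ψ : Word K → α) : ℝ :=
  P.pr {x | ψ (φ x) ≠ x}

/-- Overflow probability of an encoder φ with threshold η. -/
noncomputable def ovP {α : Type*} {K : ℕ} (P : Dist α) (φ : α → Word K) (η : ℝ) : ℝ :=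
  P.pr {x | wlen (φ x) > η}

/-- A general source: for each blocklength n, a distribution on 𝒳^n. -/
abbrev Source (𝒳 : Type*) := (n : ℕ) → Dist (Fin n → 𝒳)

/-- The limit as ν ↓ 0 of a function g which is nonincreasing in ν
(the limit exists by monotonicity and equals the supremum over ν > 0). -/
noncomputable def limNu (g : ℝ → ℝ) : ℝ := sSup (g '' Set.Ioi (0 : ℝ))

variable {𝒳 : Type*}

/-- A rate R ≥ 0 is (ε,δ)-achievable. -/
def FirstAch (K : ℕ) (X : Source 𝒳) (ε δ R : ℝ) : Prop :=
  0 ≤ R ∧ ∃ (φ : ∀ n, (Fin n → 𝒳) → Word K) (ψ : ∀ n, Word K → (Fin n → 𝒳)),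
    limsup (fun n => errP (X n) (φ n) (ψ n)) atTop ≤ ε ∧
    limsup (fun n => ovP (X n) (φ n) ((n : ℝ) * R)) atTop ≤ δ

/-- The first-order (ε,δ)-optimum threshold R(ε,δ|X). -/
noncomputable def Ropt (K : ℕ) (X : Source 𝒳) (ε δ : ℝ) : ℝ :=
  sInf {R | FirstAch K X ε δ R}

/-- L is (ε,δ,R)-achievable (second order). -/
def SecondAch (K : ℕ) (X : Source 𝒳) (ε δ R L : ℝ) : Prop :=
  ∃ (φ : ∀ n, (Fin n → 𝒳) → Word K) (ψ : ∀ n, Word K → (Fin n → 𝒳)),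
    limsup (fun n => errP (X n) (φ n) (ψ n)) atTop ≤ ε ∧
    limsup (fun n => ovP (X n) (φ n) ((n : ℝ) * R + Real.sqrt (n : ℝ) * L)) atTop ≤ δ

/-- The second-order (ε,δ,R)-optimum threshold L(ε,δ,R|X). -/
noncomputable def Lopt (K : ℕ) (X : Source 𝒳) (ε δ R : ℝ) : ℝ :=
  sInf {L | SecondAch K X ε δ R L}

/-- A rate R ≥ 0 is optimistically (ε,δ)-achievable. -/
def OptFirstAch (K : ℕ) (X : Source 𝒳) (ε δ R : ℝ) : Prop :=
  0 ≤ R ∧ ∃ (φ : ∀ n, (Fin n → 𝒳) → Word K) (ψ : ∀ n, Word K → (Fin n → 𝒳)),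
    ∀ γ > (0 : ℝ), ∃ ns : ℕ → ℕ, StrictMono ns ∧ ∀ i,
      errP (X (ns i)) (φ (ns i)) (ψ (ns i)) ≤ ε + γ ∧
      ovP (X (ns i)) (φ (ns i)) ((ns i : ℝ) * R) ≤ δ + γ

/-- The optimistic first-order (ε,δ)-optimum threshold R*(ε,δ|X). -/
noncomputable def RoptStar (K : ℕ) (X : Source 𝒳) (ε δ : ℝ) : ℝ :=
  sInf {R | OptFirstAch K X ε δ R}

/-- L is optimistically (ε,δ,R)-achievable. -/
def OptSecondAch (K : ℕ) (X : Source 𝒳) (ε δ R L : ℝ) : Prop :=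
  ∃ (φ : ∀ n, (Fin n → 𝒳) → Word K) (ψ : ∀ n, Word K → (Fin n → 𝒳)),
    ∀ γ > (0 : ℝ), ∃ ns : ℕ → ℕ, StrictMono ns ∧ ∀ i,
      errP (X (ns i)) (φ (ns i)) (ψ (ns i)) ≤ ε + γ ∧
      ovP (X (ns i)) (φ (ns i)) ((ns i : ℝ) * R + Real.sqrt (ns i : ℝ) * L) ≤ δ + γ

/-- The optimistic second-order (ε,δ,R)-optimum threshold L*(ε,δ,R|X). -/
noncomputable def LoptStar (K : ℕ) (X : Source 𝒳) (ε δ R : ℝ) : ℝ :=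
  sInf {L | OptSecondAch K X ε δ R L}

/-- A rate R ≥ 0 is type I (ε,δ)-achievable. -/
def TypeIAch (K : ℕ) (X : Source 𝒳) (ε δ R : ℝ) : Prop :=
  0 ≤ R ∧ ∃ (φ : ∀ n, (Fin n → 𝒳) → Word K) (ψ : ∀ n, Word K → (Fin n → 𝒳)),
    limsup (fun n => errP (X n) (φ n) (ψ n)) atTop ≤ ε ∧
    liminf (fun n => ovP (X n) (φ n) ((n : ℝ) * R)) atTop ≤ δ

/-- R†(ε,δ|X). -/
noncomputable def Rdagger (K : ℕ) (X : Source 𝒳) (ε δ : ℝ) : ℝ :=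
  sInf {R | TypeIAch K X ε δ R}

/-- A rate R ≥ 0 is type II (ε,δ)-achievable. -/
def TypeIIAch (K : ℕ) (X : Source 𝒳) (ε δ R : ℝ) : Prop :=
  0 ≤ R ∧ ∃ (φ : ∀ n, (Fin n → 𝒳) → Word K) (ψ : ∀ n, Word K → (Fin n → 𝒳)),
    liminf (fun n => errP (X n) (φ n) (ψ n)) atTop ≤ ε ∧
    limsup (fun n => ovP (X n) (φ n) ((n : ℝ) * R)) atTop ≤ δ

/-- R‡(ε,δ|X). -/
noncomputable def Rddagger (K : ℕ) (X : Source 𝒳) (ε δ : ℝ) : ℝ :=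
  sInf {R | TypeIIAch K X ε δ R}

/-- H̄_γ(X) := inf{ R : limsup_n Pr{ (1/n) log(1/P_{X^n}(X^n)) > R } ≤ γ }. -/
noncomputable def Hbar (K : ℕ) (X : Source 𝒳) (γ : ℝ) : ℝ :=
  sInf {R | limsup (fun n =>
    (X n).pr {x | Real.logb (K : ℝ) (1 / (X n).p x) / (n : ℝ) > R}) atTop ≤ γ}

/-- H̄*_γ(X) (optimistic version, with liminf). -/
noncomputable def HbarStar (K : ℕ) (X : Source 𝒳) (γ : ℝ) : ℝ :=
  sInf {R | liminf (fun n =>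
    (X n).pr {x | Real.logb (K : ℝ) (1 / (X n).p x) / (n : ℝ) > R}) atTop ≤ γ}

/-- H̄_γ(R|X) := inf{ L : limsup_n Pr{ (1/n) log(1/P_{X^n}(X^n)) > R + L/√n } ≤ γ }. -/
noncomputable def Hbar2 (K : ℕ) (X : Source 𝒳) (γ R : ℝ) : ℝ :=
  sInf {L | limsup (fun n =>
    (X n).pr {x | Real.logb (K : ℝ) (1 / (X n).p x) / (n : ℝ)
      > R + L / Real.sqrt (n : ℝ)}) atTop ≤ γ}

/-- H̄*_γ(R|X) (optimistic version, with liminf). -/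
noncomputable def Hbar2Star (K : ℕ) (X : Source 𝒳) (γ R : ℝ) : ℝ :=
  sInf {L | liminf (fun n =>
    (X n).pr {x | Real.logb (K : ℝ) (1 / (X n).p x) / (n : ℝ)
      > R + L / Real.sqrt (n : ℝ)}) atTop ≤ γ}

/-- F(ε,R) := limsup_n inf_{A : Pr(A) ≥ 1−ε} Pr{ −(1/n) log P_{X^n}(X^n) ≥ R, X^n ∈ A }. -/
noncomputable def Fspec (K : ℕ) (X : Source 𝒳) (ε R : ℝ) : ℝ :=
  limsup (fun n =>
    sInf ((fun A : Set (Fin n → 𝒳) =>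
        (X n).pr (A ∩ {x | -Real.logb (K : ℝ) ((X n).p x) / (n : ℝ) ≥ R})) ''
      {A | (X n).pr A ≥ 1 - ε})) atTop

/-- H̃_{ε,δ}(X) := inf{ R : F(ε,R) ≤ δ }. -/
noncomputable def Htilde (K : ℕ) (X : Source 𝒳) (ε δ : ℝ) : ℝ :=
  sInf {R | Fspec K X ε R ≤ δ}

/-- G_{ε,δ}(X). -/
noncomputable def Gfirst (K : ℕ) (X : Source 𝒳) (ε δ : ℝ) : ℝ :=
  sInf {R | limNu (fun ν => limsup (fun n =>
    sInf ((fun A : Set (Fin n → 𝒳) =>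
        (X n).pr (A ∩ {x | -Real.logb (K : ℝ) ((X n).p x / (X n).pr A) / (n : ℝ) ≥ R})) ''
      {A | (X n).pr A ≥ 1 - ε - ν})) atTop) ≤ δ}

/-- G*_{ε,δ}(X) (optimistic version, with liminf). -/
noncomputable def GfirstStar (K : ℕ) (X : Source 𝒳) (ε δ : ℝ) : ℝ :=
  sInf {R | limNu (fun ν => liminf (fun n =>
    sInf ((fun A : Set (Fin n → 𝒳) =>
        (X n).pr (A ∩ {x | -Real.logb (K : ℝ) ((X n).p x / (X n).pr A) / (n : ℝ) ≥ R})) ''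
      {A | (X n).pr A ≥ 1 - ε - ν})) atTop) ≤ δ}

/-- G_{ε,δ}(R|X). -/
noncomputable def Gsecond (K : ℕ) (X : Source 𝒳) (ε δ R : ℝ) : ℝ :=
  sInf {L | limNu (fun ν => limsup (fun n =>
    sInf ((fun A : Set (Fin n → 𝒳) =>
        (X n).pr (A ∩ {x | -Real.logb (K : ℝ) ((X n).p x / (X n).pr A) / (n : ℝ)
          ≥ R + L / Real.sqrt (n : ℝ)})) ''
      {A | (X n).pr A ≥ 1 - ε - ν})) atTop) ≤ δ}

/-- G*_{ε,δ}(R|X) (optimistic version, with liminf). -/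
noncomputable def GsecondStar (K : ℕ) (X : Source 𝒳) (ε δ R : ℝ) : ℝ :=
  sInf {L | limNu (fun ν => liminf (fun n =>
    sInf ((fun A : Set (Fin n → 𝒳) =>
        (X n).pr (A ∩ {x | -Real.logb (K : ℝ) ((X n).p x / (X n).pr A) / (n : ℝ)
          ≥ R + L / Real.sqrt (n : ℝ)})) ''
      {A | (X n).pr A ≥ 1 - ε - ν})) atTop) ≤ δ}

/-- A rate R is optimistically ε-achievable by fixed-length codes. -/
def FixAchR (K : ℕ) (X : Source 𝒳) (ε R : ℝ) : Prop :=
  ∃ (M : ℕ → ℕ) (φ : ∀ n, (Fin n → 𝒳) → Fin (M n)) (ψ : ∀ n, Fin (M n) → (Fin n → 𝒳)),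
    ∀ γ > (0 : ℝ), ∃ ns : ℕ → ℕ, StrictMono ns ∧ ∀ i,
      (X (ns i)).pr {x | ψ (ns i) (φ (ns i) x) ≠ x} ≤ ε + γ ∧
      Real.logb (K : ℝ) (M (ns i) : ℝ) / (ns i : ℝ) ≤ R + γ

/-- R^f(ε|X). -/
noncomputable def Rfix (K : ℕ) (X : Source 𝒳) (ε : ℝ) : ℝ :=
  sInf {R | FixAchR K X ε R}

/-- A real L is optimistically (ε,R)-achievable by fixed-length codes. -/
def FixAchL (K : ℕ) (X : Source 𝒳) (ε R L : ℝ) : Prop :=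
  ∃ (M : ℕ → ℕ) (φ : ∀ n, (Fin n → 𝒳) → Fin (M n)) (ψ : ∀ n, Fin (M n) → (Fin n → 𝒳)),
    ∀ γ > (0 : ℝ), ∃ ns : ℕ → ℕ, StrictMono ns ∧ ∀ i,
      (X (ns i)).pr {x | ψ (ns i) (φ (ns i) x) ≠ x} ≤ ε + γ ∧
      Real.logb (K : ℝ) ((M (ns i) : ℝ) / (K : ℝ) ^ ((ns i : ℝ) * R)) / Real.sqrt (ns i : ℝ)
        ≤ L + γ

/-- L^f(ε,R|X). -/
noncomputable def Lfix (K : ℕ) (X : Source 𝒳) (ε R : ℝ) : ℝ :=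
  sInf {L | FixAchL K X ε R L}


section Aux

variable {α : Type*} (P : Dist α)

lemma summable' : Summable P.p := P.hasSum.summable

lemma pr_eq (A : Set α) : P.pr A = ∑' x, A.indicator P.p x := tsum_subtype A P.p

lemma pr_nonneg (A : Set α) : 0 ≤ P.pr A := tsum_nonneg fun _ => P.nonneg _

lemma pr_mono {A B : Set α} (h : A ⊆ B) : P.pr A ≤ P.pr B := by
  rw [pr_eq, pr_eq]
  exact Summable.tsum_le_tsum
    (fun x => Set.indicator_le_indicator_of_subset h (fun y => P.nonneg y) x)
    ((summable' P).indicator A) ((summable' P).indicator B)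

lemma pr_univ : P.pr Set.univ = 1 := by
  rw [Dist.pr, tsum_univ]; exact P.hasSum.tsum_eq

lemma pr_le_one (A : Set α) : P.pr A ≤ 1 := by
  rw [← pr_univ P]; exact pr_mono P (Set.subset_univ A)

lemma p_le_pr {A : Set α} {x : α} (hx : x ∈ A) : P.p x ≤ P.pr A := by
  rw [pr_eq]
  have := Summable.le_tsum ((summable' P).indicator A) x
    (fun j _ => Set.indicator_nonneg (fun y _ => P.nonneg y) j)
  rwa [Set.indicator_of_mem hx] at this

lemma p_le_one (x : α) : P.p x ≤ 1 := by
  rw [← pr_univ P]; exact p_le_pr P (Set.mem_univ x)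

/-- generic inner infimum -/
noncomputable def inn (P : Dist α) (t : ℝ) (g : Set α → Set α) : ℝ :=
  sInf ((fun A => P.pr (A ∩ g A)) '' {A | P.pr A ≥ t})

lemma inn_bddBelow (t : ℝ) (g : Set α → Set α) :
    BddBelow ((fun A => P.pr (A ∩ g A)) '' {A | P.pr A ≥ t}) := by
  refine ⟨0, ?_⟩; rintro b ⟨A, -, rfl⟩; exact pr_nonneg P _

lemma univ_mem {t : ℝ} (ht : t ≤ 1) : Set.univ ∈ {A : Set α | P.pr A ≥ t} := by
  simpa [pr_univ P] using ht

lemma inn_nonneg (t : ℝ) (g : Set α → Set α) : 0 ≤ inn P t g :=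
  Real.sInf_nonneg (by rintro b ⟨A, -, rfl⟩; exact pr_nonneg P _)

lemma inn_le_one {t : ℝ} (ht : t ≤ 1) (g : Set α → Set α) : inn P t g ≤ 1 :=
  le_trans (csInf_le (inn_bddBelow P t g) ⟨Set.univ, univ_mem P ht, rfl⟩) (pr_le_one P _)

lemma inn_mono {t : ℝ} (ht : t ≤ 1) {g g' : Set α → Set α}
    (h : ∀ A, P.pr A ≥ t → A ∩ g A ⊆ A ∩ g' A) : inn P t g ≤ inn P t g' := by
  refine le_csInf ⟨_, Set.mem_image_of_mem _ (univ_mem P ht)⟩ ?_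
  rintro b ⟨A, hA, rfl⟩
  exact le_trans (csInf_le (inn_bddBelow P t g) ⟨A, hA, rfl⟩) (pr_mono P (h A hA))

lemma inn_ge {t : ℝ} (ht : t ≤ 1) {g : Set α → Set α}
    (h : ∀ A, P.pr A ≥ t → A ⊆ g A) : t ≤ inn P t g := by
  refine le_csInf ⟨_, Set.mem_image_of_mem _ (univ_mem P ht)⟩ ?_
  rintro b ⟨A, hA, rfl⟩
  simp only []
  rw [Set.inter_eq_left.mpr (h A hA)]; exact hA

lemma inn_le_zero {t : ℝ} (ht : t ≤ 0) (g : Set α → Set α) : inn P t g ≤ 0 := by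
  have h0 : (∅ : Set α) ∈ {A : Set α | P.pr A ≥ t} := by
    simp only [Set.mem_setOf_eq, ge_iff_le]
    exact ht.trans (pr_nonneg P ∅)
  refine le_trans (csInf_le (inn_bddBelow P t g) ⟨∅, h0, rfl⟩) ?_
  simp only []
  rw [Set.empty_inter]
  have : P.pr ∅ = 0 := by rw [Dist.pr]; exact tsum_empty
  exact le_of_eq this

end Aux

/-- the overflow event of G (conditioned version). -/
def EGset (K : ℕ) (X : Source 𝒳) (R : ℝ) (n : ℕ) : Set (Fin n → 𝒳) → Set (Fin n → 𝒳) :=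
  fun A => {x | -Real.logb (K : ℝ) ((X n).p x / (X n).pr A) / (n : ℝ) ≥ R}
/-- the overflow event of F. -/
def EFset (K : ℕ) (X : Source 𝒳) (R : ℝ) (n : ℕ) : Set (Fin n → 𝒳) → Set (Fin n → 𝒳) :=
  fun _ => {x | -Real.logb (K : ℝ) ((X n).p x) / (n : ℝ) ≥ R}

noncomputable def seqG (K : ℕ) (X : Source 𝒳) (t R : ℝ) : ℕ → ℝ :=
  fun n => inn (X n) t (EGset K X R n)
noncomputable def seqF (K : ℕ) (X : Source 𝒳) (t R : ℝ) : ℕ → ℝ :=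
  fun n => inn (X n) t (EFset K X R n)

lemma Gfirst_eq (K : ℕ) (X : Source 𝒳) (ε δ : ℝ) :
    Gfirst K X ε δ
      = sInf {R | limNu (fun ν => limsup (seqG K X (1 - ε - ν) R) atTop) ≤ δ} := rfl

lemma Fspec_eq (K : ℕ) (X : Source 𝒳) (e R : ℝ) :
    Fspec K X e R = limsup (seqF K X (1 - e) R) atTop := rfl

lemma cobound (u : ℕ → ℝ) (h : ∀ n, 0 ≤ u n) :
    IsCoboundedUnder (· ≤ ·) atTop u :=
  isCoboundedUnder_le_of_eventually_le atTop (Eventually.of_forall h)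

lemma bound1 (u : ℕ → ℝ) (h : ∀ n, u n ≤ 1) : IsBoundedUnder (· ≤ ·) atTop u :=
  isBoundedUnder_of ⟨1, h⟩

/-- pointwise inclusion: conditioned event is smaller. -/
lemma EG_subset_EF (K : ℕ) (X : Source 𝒳) (hK1 : (1:ℝ) < K) (R : ℝ) (n : ℕ)
    (A : Set (Fin n → 𝒳)) : A ∩ EGset K X R n A ⊆ A ∩ EFset K X R n A := by
  rintro x ⟨hxA, hx⟩
  refine ⟨hxA, ?_⟩
  have key : Real.logb (K : ℝ) ((X n).p x) ≤ Real.logb (K : ℝ) ((X n).p x / (X n).pr A) := by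
    rcases eq_or_lt_of_le ((X n).nonneg x) with hp | hp
    · rw [← hp]; simp
    · have hq : 0 < (X n).pr A := lt_of_lt_of_le hp (p_le_pr _ hxA)
      have hle : (X n).p x ≤ (X n).p x / (X n).pr A := by
        rw [le_div_iff₀ hq]
        exact mul_le_of_le_one_right hp.le (pr_le_one _ A)
      exact (Real.logb_le_logb hK1 hp (div_pos hp hq)).mpr hle
  have hx' : R ≤ -Real.logb (K : ℝ) ((X n).p x / (X n).pr A) / (n : ℝ) := hx
  show R ≤ -Real.logb (K : ℝ) ((X n).p x) / (n : ℝ)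
  rcases Nat.eq_zero_or_pos n with h0 | h0
  · subst h0; simpa using hx'
  · have hn : (0:ℝ) < n := by exact_mod_cast h0
    exact hx'.trans ((div_le_div_iff_of_pos_right hn).mpr (neg_le_neg key))

/-- if R ≤ 0 then every point of A is in the conditioned event. -/
lemma subset_EG (K : ℕ) (X : Source 𝒳) (hK1 : (1:ℝ) < K) {R : ℝ} (hR : R ≤ 0) (n : ℕ)
    (A : Set (Fin n → 𝒳)) : A ⊆ EGset K X R n A := by
  intro x hxA
  have h01 : (X n).p x / (X n).pr A ≤ 1 := by
    rcases eq_or_lt_of_le (pr_nonneg (X n) A) with hq | hq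
    · rw [← hq, div_zero]; exact zero_le_one
    · rw [div_le_one hq]; exact p_le_pr _ hxA
  have h00 : 0 ≤ (X n).p x / (X n).pr A := div_nonneg ((X n).nonneg x) (pr_nonneg _ _)
  have := Real.logb_nonpos hK1 h00 h01
  show R ≤ -Real.logb (K : ℝ) ((X n).p x / (X n).pr A) / (n : ℝ)
  have : 0 ≤ -Real.logb (K : ℝ) ((X n).p x / (X n).pr A) / (n : ℝ) :=
    div_nonneg (neg_nonneg.mpr this) (Nat.cast_nonneg n)
  linarith

/-- if R ≤ 0 then every point is in the F event. -/
lemma subset_EF (K : ℕ) (X : Source 𝒳) (hK1 : (1:ℝ) < K) {R : ℝ} (hR : R ≤ 0) (n : ℕ)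
    (A : Set (Fin n → 𝒳)) : A ⊆ EFset K X R n A := by
  intro x _
  have := Real.logb_nonpos hK1 ((X n).nonneg x) (p_le_one (X n) x)
  show R ≤ -Real.logb (K : ℝ) ((X n).p x) / (n : ℝ)
  have : 0 ≤ -Real.logb (K : ℝ) ((X n).p x) / (n : ℝ) :=
    div_nonneg (neg_nonneg.mpr this) (Nat.cast_nonneg n)
  linarith

/-- eventual inclusion in the other direction, for R' > R. -/
lemma EF_subset_EG (K : ℕ) (X : Source 𝒳) (hK1 : (1:ℝ) < K) {t R R' : ℝ}
    (h1 : 0 < t) (ht1 : t ≤ 1) (hRR' : R < R') :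
    ∃ N : ℕ, ∀ n ≥ N, ∀ A : Set (Fin n → 𝒳), (X n).pr A ≥ t →
      A ∩ EFset K X R' n A ⊆ A ∩ EGset K X R n A := by
  set c : ℝ := -Real.logb (K : ℝ) t with hc
  have hc0 : 0 ≤ c := neg_nonneg.mpr (Real.logb_nonpos hK1 h1.le ht1)
  refine ⟨max 1 ⌈c / (R' - R)⌉₊, fun n hn A hA => ?_⟩
  have hn1 : 1 ≤ n := le_trans (le_max_left _ _) hn
  have hnc : ⌈c / (R' - R)⌉₊ ≤ n := le_trans (le_max_right _ _) hn
  have hn0 : (0:ℝ) < n := by exact_mod_cast hn1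
  have hRR : 0 < R' - R := by linarith
  have hcn : c ≤ (n : ℝ) * (R' - R) := by
    have : c / (R' - R) ≤ (n : ℝ) := le_trans (Nat.le_ceil _) (by exact_mod_cast hnc)
    calc c = c / (R' - R) * (R' - R) := by field_simp
    _ ≤ (n : ℝ) * (R' - R) := by nlinarith
  rintro x ⟨hxA, hx⟩
  refine ⟨hxA, ?_⟩
  have hq : 0 < (X n).pr A := lt_of_lt_of_le h1 hA
  have hx' : R' ≤ -Real.logb (K : ℝ) ((X n).p x) / (n : ℝ) := hx
  have hx'' : R' * n ≤ -Real.logb (K : ℝ) ((X n).p x) := (le_div_iff₀ hn0).mp hx'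
  show R ≤ -Real.logb (K : ℝ) ((X n).p x / (X n).pr A) / (n : ℝ)
  rw [le_div_iff₀ hn0]
  rcases eq_or_lt_of_le ((X n).nonneg x) with hp | hp
  · rw [← hp, zero_div, Real.logb_zero, neg_zero]
    rw [← hp, Real.logb_zero, neg_zero] at hx''
    nlinarith
  · rw [Real.logb_div hp.ne' hq.ne']
    have hqt : Real.logb (K : ℝ) t ≤ Real.logb (K : ℝ) ((X n).pr A) :=
      (Real.logb_le_logb hK1 h1 hq).mpr hA
    have : -c ≤ Real.logb (K : ℝ) ((X n).pr A) := by rw [hc]; linarith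
    nlinarith

section Main
variable (K : ℕ) (X : Source 𝒳) (ε δ : ℝ)

lemma lemA (hK1 : (1:ℝ) < K) (hε0 : 0 ≤ ε) (hδ0 : 0 ≤ δ) (R : ℝ)
    (hF : limNu (fun ν => Fspec K X (ε + ν) R) ≤ δ) :
    limNu (fun ν => limsup (seqG K X (1 - ε - ν) R) atTop) ≤ δ := by
  refine Real.sSup_le ?_ hδ0
  rintro y ⟨ν, hν, rfl⟩
  have hν0 : (0:ℝ) < ν := hν
  have ht1 : 1 - ε - ν ≤ 1 := by linarith
  have step1 : limsup (seqG K X (1 - ε - ν) R) atTop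
      ≤ limsup (seqF K X (1 - ε - ν) R) atTop := by
    refine limsup_le_limsup (Eventually.of_forall fun n =>
        inn_mono _ ht1 (fun A _ => EG_subset_EF K X hK1 R n A))
      (cobound _ fun n => inn_nonneg _ _ _)
      (bound1 _ fun n => inn_le_one _ ht1 _)
  have hbdd : BddAbove ((fun ν => Fspec K X (ε + ν) R) '' Set.Ioi (0:ℝ)) := by
    refine ⟨1, ?_⟩
    rintro y ⟨ν', hν', rfl⟩
    have hν'0 : (0:ℝ) < ν' := hν'
    show Fspec K X (ε + ν') _ ≤ 1
    rw [Fspec_eq]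
    exact limsup_le_of_le (cobound _ fun n => inn_nonneg _ _ _)
      (Eventually.of_forall fun n => inn_le_one _ (by linarith) _)
  have step2 : Fspec K X (ε + ν) R ≤ δ :=
    le_trans (le_csSup hbdd ⟨ν, hν, rfl⟩) hF
  rw [Fspec_eq, show (1:ℝ) - (ε + ν) = 1 - ε - ν from (sub_sub 1 ε ν).symm] at step2
  exact step1.trans step2

lemma lemB (hK1 : (1:ℝ) < K) (hε0 : 0 ≤ ε) (hδ0 : 0 ≤ δ) {R R' : ℝ} (hRR' : R < R')
    (hG : limNu (fun ν => limsup (seqG K X (1 - ε - ν) R) atTop) ≤ δ) :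
    limNu (fun ν => Fspec K X (ε + ν) R') ≤ δ := by
  refine Real.sSup_le ?_ hδ0
  rintro y ⟨ν, hν, rfl⟩
  have hν0 : (0:ℝ) < ν := hν
  show Fspec K X (ε + ν) R' ≤ δ
  rw [Fspec_eq, show (1:ℝ) - (ε + ν) = 1 - ε - ν from (sub_sub 1 ε ν).symm]
  by_cases h1 : 0 < 1 - ε - ν
  · have ht1 : 1 - ε - ν ≤ 1 := by linarith
    obtain ⟨N, hN⟩ := EF_subset_EG K X hK1 h1 ht1 hRR'
    have step1 : limsup (seqF K X (1 - ε - ν) R') atTop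
        ≤ limsup (seqG K X (1 - ε - ν) R) atTop := by
      refine limsup_le_limsup ?_ (cobound _ fun n => inn_nonneg _ _ _)
        (bound1 _ fun n => inn_le_one _ ht1 _)
      exact eventually_atTop.mpr ⟨N, fun n hn => inn_mono _ ht1 (hN n hn)⟩
    have hbdd : BddAbove
        ((fun ν => limsup (seqG K X (1 - ε - ν) R) atTop) '' Set.Ioi (0:ℝ)) := by
      refine ⟨1, ?_⟩
      rintro y ⟨ν', hν', rfl⟩
      have hν'0 : (0:ℝ) < ν' := hν'
      exact limsup_le_of_le (cobound _ fun n => inn_nonneg _ _ _)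
        (Eventually.of_forall fun n => inn_le_one _ (by linarith) _)
    exact step1.trans (le_trans (le_csSup hbdd ⟨ν, hν, rfl⟩) hG)
  · push_neg at h1
    refine le_trans (limsup_le_of_le (cobound _ fun n => inn_nonneg _ _ _)
      (Eventually.of_forall fun n => inn_le_zero _ h1 _)) hδ0

lemma lemNegG (hK1 : (1:ℝ) < K) (hε0 : 0 ≤ ε) (hδ0 : 0 ≤ δ) (hεδ : ε + δ < 1) {R : ℝ} (hR : R < 0) :
    ¬ (limNu (fun ν => limsup (seqG K X (1 - ε - ν) R) atTop) ≤ δ) := by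
  intro hcon
  set ν₀ : ℝ := (1 - ε - δ) / 2 with hν₀def
  have hν₀ : 0 < ν₀ := by unfold ν₀; linarith
  have hδt : δ < 1 - ε - ν₀ := by unfold ν₀; linarith
  have ht1 : 1 - ε - ν₀ ≤ 1 := by unfold ν₀; linarith
  have hlb : ∀ n, 1 - ε - ν₀ ≤ seqG K X (1 - ε - ν₀) R n :=
    fun n => inn_ge _ ht1 (fun A _ => subset_EG K X hK1 hR.le n A)
  have hls : 1 - ε - ν₀ ≤ limsup (seqG K X (1 - ε - ν₀) R) atTop :=
    le_limsup_of_frequently_le (Frequently.of_forall hlb)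
      (bound1 _ fun n => inn_le_one _ ht1 _)
  have hbdd : BddAbove
      ((fun ν => limsup (seqG K X (1 - ε - ν) R) atTop) '' Set.Ioi (0:ℝ)) := by
    refine ⟨1, ?_⟩
    rintro y ⟨ν', hν', rfl⟩
    have hν'0 : (0:ℝ) < ν' := hν'
    exact limsup_le_of_le (cobound _ fun n => inn_nonneg _ _ _)
      (Eventually.of_forall fun n => inn_le_one _ (by linarith) _)
  have := le_trans hls (le_trans (le_csSup hbdd ⟨ν₀, hν₀, rfl⟩) hcon)
  linarith

lemma lemNegF (hK1 : (1:ℝ) < K) (hε0 : 0 ≤ ε) (hδ0 : 0 ≤ δ) (hεδ : ε + δ < 1) {R : ℝ} (hR : R < 0) :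
    ¬ (limNu (fun ν => Fspec K X (ε + ν) R) ≤ δ) := by
  intro hcon
  set ν₀ : ℝ := (1 - ε - δ) / 2 with hν₀def
  have hν₀ : 0 < ν₀ := by unfold ν₀; linarith
  have hδt : δ < 1 - ε - ν₀ := by unfold ν₀; linarith
  have ht1 : 1 - ε - ν₀ ≤ 1 := by unfold ν₀; linarith
  have hlb : ∀ n, 1 - ε - ν₀ ≤ seqF K X (1 - ε - ν₀) R n :=
    fun n => inn_ge _ ht1 (fun A _ => subset_EF K X hK1 hR.le n A)
  have hls : 1 - ε - ν₀ ≤ limsup (seqF K X (1 - ε - ν₀) R) atTop :=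
    le_limsup_of_frequently_le (Frequently.of_forall hlb)
      (bound1 _ fun n => inn_le_one _ ht1 _)
  have hbdd : BddAbove ((fun ν => Fspec K X (ε + ν) R) '' Set.Ioi (0:ℝ)) := by
    refine ⟨1, ?_⟩
    rintro y ⟨ν', hν', rfl⟩
    have hν'0 : (0:ℝ) < ν' := hν'
    show Fspec K X (ε + ν') _ ≤ 1
    rw [Fspec_eq]
    exact limsup_le_of_le (cobound _ fun n => inn_nonneg _ _ _)
      (Eventually.of_forall fun n => inn_le_one _ (by linarith) _)
  have hFs : Fspec K X (ε + ν₀) R = limsup (seqF K X (1 - ε - ν₀) R) atTop := by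
    rw [Fspec_eq, sub_sub]
  have := le_trans hls (le_trans (hFs ▸ le_csSup hbdd ⟨ν₀, hν₀, rfl⟩) hcon)
  linarith

end Main


/-- G_{ε,δ}(X) = inf{ R : lim_{ν↓0} F(ε+ν, R) ≤ δ }. -/
theorem statement4 {𝒳 : Type*} [Countable 𝒳] (K : ℕ) (hK : 2 ≤ K) (X : Source 𝒳)
    (ε δ : ℝ) (hε0 : 0 ≤ ε) (hε1 : ε < 1) (hδ0 : 0 ≤ δ) (hδ1 : δ < 1) (hεδ : ε + δ < 1) :
    Gfirst K X ε δ = sInf {R | limNu (fun ν => Fspec K X (ε + ν) R) ≤ δ} := by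
  have hK1 : (1:ℝ) < K := by
    have : 1 < K := hK
    exact_mod_cast this
  rw [Gfirst_eq]
  set SG := {R | limNu (fun ν => limsup (seqG K X (1 - ε - ν) R) atTop) ≤ δ} with hSGdef
  set SF := {R | limNu (fun ν => Fspec K X (ε + ν) R) ≤ δ} with hSFdef
  have hAB : SF ⊆ SG := fun R hR => lemA K X ε δ hK1 hε0 hδ0 R hR
  have hB : ∀ R ∈ SG, ∀ R', R < R' → R' ∈ SF :=
    fun R hR R' h => lemB K X ε δ hK1 hε0 hδ0 h hR
  have hGpos : ∀ R ∈ SG, (0:ℝ) ≤ R := fun R hR =>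
    le_of_not_gt fun h => lemNegG K X ε δ hK1 hε0 hδ0 hεδ h hR
  have hFpos : ∀ R ∈ SF, (0:ℝ) ≤ R := fun R hR =>
    le_of_not_gt fun h => lemNegF K X ε δ hK1 hε0 hδ0 hεδ h hR
  by_cases hne : SF.Nonempty
  · apply le_antisymm
    · exact csInf_le_csInf ⟨0, fun x hx => hGpos x hx⟩ hne hAB
    · obtain ⟨R0, hR0⟩ := hne
      refine le_csInf ⟨R0, hAB hR0⟩ fun R hR => ?_
      exact le_of_forall_gt_imp_ge_of_dense fun R' hR' =>
        csInf_le ⟨0, fun x hx => hFpos x hx⟩ (hB R hR R' hR')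
  · have h2 : SG = ∅ := by
      by_contra h
      obtain ⟨R, hR⟩ := Set.nonempty_iff_ne_empty.mpr h
      exact hne ⟨R + 1, hB R hR (R + 1) (lt_add_one R)⟩
    rw [Set.not_nonempty_iff_eq_empty] at hne
    rw [h2, hne]
end NY
end

section
/- For any general source X and any ε, δ ∈ [0,1) satisfying ε + δ < 1, it holds that G_{ε,δ}(X) ≥ H̄_{ε+δ}(X). -/
open Filter MeasureTheory

namespace NY

variable {𝒳 : Type*}

/-!
Write `h(x) = (1/n) log (1/P_{X^n}(x))`. If `Pr A ≥ 1 - ε - ν`, conditioning on `A` lowers the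
density by at most `-(1/n) log (1 - ε - ν) → 0`, so for large `n` the event `{h > R + η}` lies in
`Aᶜ ∪ (A ∩ {h_A ≥ R})`, where `h_A` is the conditional density. Taking the infimum over `A`, then
`limsup` and `ν ↓ 0`, every rate admissible for `G_{ε,δ}` becomes admissible for `H̄_{ε+δ}` after
adding any `η > 0`.

The infimum of an empty set of reals is `0`, so we also need: if some `R` is admissible for
`H̄_{ε+δ}`, then so is `R + 1` for `G_{ε,δ}`. The points with `h > R + 1/2` have mass at most
`K^{-n(R+1/2)}` each, so greedily adding them to `{h ≤ R + 1/2}` yields an admissible `A` for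
which `A ∩ {h_A ≥ R + 1}` consists of added points of total mass `≤ δ + K^{-n(R+1/2)}`.
-/

lemma Finset.exists_subset_sum_mem_Icc {β : Type*} [DecidableEq β] (f : β → ℝ) {a t : ℝ}
    (ha : 0 ≤ a) (s : Finset β) (hs : ∀ x ∈ s, f x ≤ a) (ht : t ≤ ∑ x ∈ s, f x) :
    ∃ u ⊆ s, ∑ x ∈ u, f x ∈ Set.Icc t (max t 0 + a) := by
  induction s using Finset.induction_on with
  | empty => exact ⟨∅, subset_rfl, ht, by simpa using add_nonneg (le_max_right t 0) ha⟩
  | insert x s hx ih =>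
    rw [Finset.sum_insert hx] at ht
    by_cases hts : t ≤ ∑ y ∈ s, f y
    · obtain ⟨u, hus, hu⟩ := ih (fun y hy => hs y (Finset.mem_insert_of_mem hy)) hts
      exact ⟨u, hus.trans (Finset.subset_insert x s), hu⟩
    · refine ⟨insert x s, subset_rfl, ?_, ?_⟩ <;> rw [Finset.sum_insert hx]
      · exact ht
      · linarith [hs x (Finset.mem_insert_self x s), le_max_left t 0]

namespace Dist

variable {α : Type*} (P : Dist α)

lemma pr_eq_tsum_indicator (A : Set α) : P.pr A = ∑' x, A.indicator P.p x :=
  tsum_subtype A P.p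

lemma summable_indicator (A : Set α) : Summable (A.indicator P.p) :=
  P.hasSum.summable.indicator A

lemma pr_nonneg (A : Set α) : 0 ≤ P.pr A :=
  tsum_nonneg fun x => P.nonneg x

lemma pr_mono {A B : Set α} (h : A ⊆ B) : P.pr A ≤ P.pr B := by
  simp only [pr_eq_tsum_indicator]
  exact (P.summable_indicator A).tsum_le_tsum
    (Set.indicator_le_indicator_of_subset h P.nonneg) (P.summable_indicator B)

lemma pr_univ : P.pr Set.univ = 1 := by
  rw [pr_eq_tsum_indicator, Set.indicator_univ]
  exact P.hasSum.tsum_eq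

lemma pr_le_one (A : Set α) : P.pr A ≤ 1 :=
  (P.pr_mono (Set.subset_univ A)).trans_eq P.pr_univ

lemma pr_finset (s : Finset α) : P.pr s = ∑ x ∈ s, P.p x :=
  s.tsum_subtype P.p

lemma p_le_pr {A : Set α} {x : α} (hx : x ∈ A) : P.p x ≤ P.pr A := by
  have h := P.pr_mono (Set.singleton_subset_iff.2 hx)
  rwa [← Finset.coe_singleton, pr_finset, Finset.sum_singleton] at h

lemma p_le_one (x : α) : P.p x ≤ 1 :=
  (P.p_le_pr (Set.mem_univ x)).trans_eq P.pr_univ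

lemma pr_union_of_disjoint {A B : Set α} (h : Disjoint A B) :
    P.pr (A ∪ B) = P.pr A + P.pr B := by
  simp only [pr_eq_tsum_indicator, Set.indicator_union_of_disjoint h]
  exact (P.summable_indicator A).tsum_add (P.summable_indicator B)

lemma pr_compl (A : Set α) : P.pr Aᶜ = 1 - P.pr A := by
  have h := P.pr_union_of_disjoint (disjoint_compl_right : Disjoint A Aᶜ)
  rw [Set.union_compl_self, P.pr_univ] at h
  linarith

lemma pr_union_le (A B : Set α) : P.pr (A ∪ B) ≤ P.pr A + P.pr B := by
  rw [← Set.union_sdiff_self, P.pr_union_of_disjoint Set.disjoint_sdiff_right]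
  linarith [P.pr_mono (Set.sdiff_subset : B \ A ⊆ B)]

lemma exists_subset_pr_mem_Icc {B : Set α} {a t : ℝ} (ha : 0 ≤ a) (hB : ∀ x ∈ B, P.p x ≤ a)
    (ht : t < P.pr B) : ∃ S ⊆ B, P.pr S ∈ Set.Icc t (max t 0 + a) := by
  classical
  have hsum : HasSum (B.indicator P.p) (P.pr B) := by
    rw [pr_eq_tsum_indicator]
    exact (P.summable_indicator B).hasSum
  obtain ⟨s, hs⟩ := (hsum.eventually (eventually_gt_nhds ht)).exists
  rw [Finset.sum_indicator_eq_sum_filter] at hs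
  obtain ⟨u, hus, hu⟩ := Finset.exists_subset_sum_mem_Icc P.p ha _
    (fun x hx => hB x (Finset.mem_filter.1 hx).2) hs.le
  exact ⟨u, fun x hx => (Finset.mem_filter.1 (hus hx)).2, by rwa [pr_finset]⟩

variable (K n : ℕ)

def infoTail (R : ℝ) : Set α := {x | Real.logb (K : ℝ) (1 / P.p x) / (n : ℝ) > R}

def condInfoTail (A : Set α) (R : ℝ) : Set α :=
  {x | -Real.logb (K : ℝ) (P.p x / P.pr A) / (n : ℝ) ≥ R}

noncomputable def admissibleInf (c R : ℝ) : ℝ :=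
  sInf ((fun A => P.pr (A ∩ P.condInfoTail K n A R)) '' {A | P.pr A ≥ c})

variable {P K n}

lemma admissibleInf_nonneg (c R : ℝ) : 0 ≤ P.admissibleInf K n c R :=
  Real.sInf_nonneg (by rintro _ ⟨A, -, rfl⟩; exact P.pr_nonneg _)

lemma admissibleInf_le {c R : ℝ} {A : Set α} (hA : c ≤ P.pr A) :
    P.admissibleInf K n c R ≤ P.pr (A ∩ P.condInfoTail K n A R) :=
  csInf_le ⟨0, by rintro _ ⟨A', -, rfl⟩; exact P.pr_nonneg _⟩ ⟨A, hA, rfl⟩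

lemma admissibleInf_le_one (c R : ℝ) : P.admissibleInf K n c R ≤ 1 := by
  by_cases hc : c ≤ 1
  · exact (admissibleInf_le (by rwa [pr_univ])).trans (P.pr_le_one _)
  · -- no set is admissible, and `sInf ∅ = 0`
    have : {A : Set α | P.pr A ≥ c} = ∅ :=
      Set.eq_empty_of_forall_notMem fun A hA => hc ((P.pr_le_one A).trans' hA)
    simp [admissibleInf, this]

lemma infoTail_eq_univ (hK : 1 < (K : ℝ)) {R : ℝ} (hR : R < 0) : P.infoTail K n R = Set.univ := by
  refine Set.eq_univ_of_forall fun x => lt_of_lt_of_le hR (div_nonneg ?_ n.cast_nonneg)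
  rcases (P.nonneg x).eq_or_lt with h0 | h0
  · simp [← h0]
  · exact Real.logb_nonneg hK (one_le_one_div h0 (P.p_le_one x))

lemma infoTail_anti {R R' : ℝ} (h : R ≤ R') : P.infoTail K n R' ⊆ P.infoTail K n R :=
  fun _ hx => lt_of_le_of_lt h hx

lemma p_lt_rpow_of_mem_infoTail (hK : 1 < (K : ℝ)) (hn : 0 < n) {R : ℝ} {x : α}
    (hx : x ∈ P.infoTail K n R) : P.p x < (K : ℝ) ^ (-(n * R)) := by
  rcases (P.nonneg x).eq_or_lt with h0 | h0
  · rw [← h0]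
    positivity
  · have hx : R * n < Real.logb K (1 / P.p x) := (lt_div_iff₀ (by positivity)).1 hx
    rw [one_div, Real.logb_inv] at hx
    exact (Real.logb_lt_iff_lt_rpow hK h0).1 (by linarith)

lemma neg_logb_div_pr_eq {A : Set α} {x : α} (hx : 0 < P.p x) (hxA : x ∈ A) :
    -Real.logb K (P.p x / P.pr A) = Real.logb K (1 / P.p x) + Real.logb K (P.pr A) := by
  rw [Real.logb_div hx.ne' (hx.trans_le (P.p_le_pr hxA)).ne', one_div, Real.logb_inv]
  ring

lemma neg_logb_div_pr_le (hK : 1 < (K : ℝ)) {A : Set α} {x : α} (hxA : x ∈ A) :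
    -Real.logb K (P.p x / P.pr A) ≤ Real.logb K (1 / P.p x) := by
  rcases (P.nonneg x).eq_or_lt with h0 | h0
  · simp [← h0]
  · rw [neg_logb_div_pr_eq h0 hxA]
    linarith [Real.logb_nonpos hK (P.pr_nonneg A) (P.pr_le_one A)]

lemma inter_condInfoTail_subset_infoTail (hK : 1 < (K : ℝ)) {A : Set α} {R R' : ℝ}
    (h : R' < R) : A ∩ P.condInfoTail K n A R ⊆ P.infoTail K n R' := fun _ ⟨hxA, hx⟩ =>
  lt_of_lt_of_le h (hx.trans (div_le_div_of_nonneg_right (neg_logb_div_pr_le hK hxA) n.cast_nonneg))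

lemma infoTail_subset_compl_union (hK : 1 < (K : ℝ)) (hn : 0 < n) {A : Set α} {c R η : ℝ}
    (hη : 0 < η) (hc : 0 < c) (hA : c ≤ P.pr A) (hcη : -Real.logb K c ≤ n * η) :
    P.infoTail K n (R + η) ⊆ Aᶜ ∪ (A ∩ P.condInfoTail K n A R) := by
  intro x hx
  by_cases hxA : x ∈ A
  · refine Or.inr ⟨hxA, ?_⟩
    rcases (P.nonneg x).eq_or_lt with h0 | h0
    · change R + η < Real.logb K (1 / P.p x) / n at hx
      show R ≤ -Real.logb K (P.p x / P.pr A) / n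
      rw [← h0] at hx ⊢
      simp only [div_zero, Real.logb_zero, zero_div, neg_zero] at hx ⊢
      linarith
    · have hnR : (R + η) * n < Real.logb K (1 / P.p x) := (lt_div_iff₀ (by positivity)).1 hx
      have hlogA : Real.logb K c ≤ Real.logb K (P.pr A) := Real.logb_le_logb_of_le hK hc hA
      show R ≤ _
      rw [le_div_iff₀ (by positivity), neg_logb_div_pr_eq h0 hxA]
      linarith
  · exact Or.inl hxA

lemma pr_infoTail_le_add_admissibleInf (hK : 1 < (K : ℝ)) (hn : 0 < n) {c R η : ℝ}
    (hη : 0 < η) (hc : 0 < c) (hc1 : c ≤ 1) (hcη : -Real.logb K c ≤ n * η) :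
    P.pr (P.infoTail K n (R + η)) ≤ (1 - c) + P.admissibleInf K n c R := by
  rw [← sub_le_iff_le_add']
  refine le_csInf ⟨_, Set.univ, (by show c ≤ P.pr Set.univ; rwa [pr_univ]), rfl⟩ ?_
  rintro _ ⟨A, hA, rfl⟩
  have hA : c ≤ P.pr A := hA
  have := P.pr_mono (infoTail_subset_compl_union (R := R) hK hn hη hc hA hcη)
  dsimp only
  linarith [P.pr_union_le Aᶜ (A ∩ P.condInfoTail K n A R), P.pr_compl A]

lemma admissibleInf_le_add_rpow (hK : 1 < (K : ℝ)) (hn : 0 < n) {c δ R : ℝ} (hδ : 0 ≤ δ)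
    (hc : c < 1) (htail : P.pr (P.infoTail K n R) ≤ 1 - c + δ) :
    P.admissibleInf K n c (R + 1) ≤ δ + (K : ℝ) ^ (-(n * (R + 1 / 2))) := by
  set Bad := P.infoTail K n (R + 1 / 2)
  have hBad : P.pr Bad ≤ 1 - c + δ := (P.pr_mono (infoTail_anti (by linarith))).trans htail
  obtain ⟨S, hSBad, hS⟩ := P.exists_subset_pr_mem_Icc (t := c - P.pr Badᶜ) (by positivity)
    (fun x hx => (p_lt_rpow_of_mem_infoTail hK hn hx).le) (by rw [pr_compl]; linarith)
  set A := Badᶜ ∪ S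
  have hA : c ≤ P.pr A := by
    rw [P.pr_union_of_disjoint (disjoint_compl_left.mono_right hSBad)]
    linarith [hS.1]
  have hsub : A ∩ P.condInfoTail K n A (R + 1) ⊆ S := fun x hx =>
    hx.1.resolve_left (not_not_intro (inter_condInfoTail_subset_infoTail hK (by linarith) hx))
  rw [pr_compl] at hS
  calc P.admissibleInf K n c (R + 1) ≤ P.pr (A ∩ P.condInfoTail K n A (R + 1)) :=
        admissibleInf_le hA
    _ ≤ P.pr S := P.pr_mono hsub
    _ ≤ δ + (K : ℝ) ^ (-(n * (R + 1 / 2))) := by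
        linarith [hS.2, max_le (show c - (1 - P.pr Bad) ≤ δ by linarith) hδ]

end Dist

lemma le_limNu {g : ℝ → ℝ} {M : ℝ} (hg : ∀ ν > 0, g ν ≤ M) {ν : ℝ} (hν : 0 < ν) :
    g ν ≤ limNu g :=
  le_csSup ⟨M, by rintro _ ⟨ν', hν', rfl⟩; exact hg ν' hν'⟩ ⟨ν, hν, rfl⟩

lemma limNu_le {g : ℝ → ℝ} {b : ℝ} (hg : ∀ ν > 0, g ν ≤ b) : limNu g ≤ b :=
  csSup_le ⟨g 1, 1, Set.mem_Ioi.2 one_pos, rfl⟩ (by rintro _ ⟨ν, hν, rfl⟩; exact hg ν hν)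

section Source

variable (K : ℕ) (X : Source 𝒳)

def gfirstRates (ε δ : ℝ) : Set ℝ :=
  {R | limNu (fun ν => limsup (fun n => (X n).admissibleInf K n (1 - ε - ν) R) atTop) ≤ δ}

def hbarRates (γ : ℝ) : Set ℝ :=
  {R | limsup (fun n => (X n).pr ((X n).infoTail K n R)) atTop ≤ γ}

variable {K X}

lemma Gfirst_eq_sInf_gfirstRates (ε δ : ℝ) : Gfirst K X ε δ = sInf (gfirstRates K X ε δ) := rfl

lemma Hbar_eq_sInf_hbarRates (γ : ℝ) : Hbar K X γ = sInf (hbarRates K X γ) := rfl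

lemma isBoundedUnder_pr (u : (n : ℕ) → Set (Fin n → 𝒳)) :
    IsBoundedUnder (· ≤ ·) atTop fun n => (X n).pr (u n) :=
  isBoundedUnder_of ⟨1, fun n => (X n).pr_le_one _⟩

lemma isCoboundedUnder_pr (u : (n : ℕ) → Set (Fin n → 𝒳)) :
    IsCoboundedUnder (· ≤ ·) atTop fun n => (X n).pr (u n) :=
  isCoboundedUnder_le_of_le atTop fun n => (X n).pr_nonneg _

lemma isBoundedUnder_admissibleInf (c R : ℝ) :
    IsBoundedUnder (· ≤ ·) atTop fun n => (X n).admissibleInf K n c R :=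
  isBoundedUnder_of ⟨1, fun _ => Dist.admissibleInf_le_one c R⟩

lemma isCoboundedUnder_admissibleInf (c R : ℝ) :
    IsCoboundedUnder (· ≤ ·) atTop fun n => (X n).admissibleInf K n c R :=
  isCoboundedUnder_le_of_le atTop fun _ => Dist.admissibleInf_nonneg c R

lemma limsup_admissibleInf_le_one (c R : ℝ) :
    limsup (fun n => (X n).admissibleInf K n c R) atTop ≤ 1 :=
  limsup_le_of_le (isCoboundedUnder_admissibleInf c R)
    (Eventually.of_forall fun _ => Dist.admissibleInf_le_one c R)

lemma nonneg_of_mem_hbarRates (hK : 1 < (K : ℝ)) {γ R : ℝ} (hγ : γ < 1)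
    (hR : R ∈ hbarRates K X γ) : 0 ≤ R := by
  by_contra! hneg
  have hone : (fun n => (X n).pr ((X n).infoTail K n R)) = fun _ => 1 :=
    funext fun n => by rw [Dist.infoTail_eq_univ hK hneg, Dist.pr_univ]
  have hR : limsup (fun n => (X n).pr ((X n).infoTail K n R)) atTop ≤ γ := hR
  rw [hone, limsup_const] at hR
  linarith

lemma add_mem_hbarRates (hK : 1 < (K : ℝ)) {ε δ R η : ℝ} (hε0 : 0 ≤ ε) (hε1 : ε < 1)
    (hη : 0 < η) (hR : R ∈ gfirstRates K X ε δ) : R + η ∈ hbarRates K X (ε + δ) := by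
  show limsup (fun n => (X n).pr ((X n).infoTail K n (R + η))) atTop ≤ ε + δ
  refine le_of_forall_pos_le_add fun κ hκ => ?_
  set ν := min κ ((1 - ε) / 2)
  have hν : 0 < ν := lt_min hκ (by linarith)
  have hc : 0 < 1 - ε - ν := by linarith [min_le_right κ ((1 - ε) / 2)]
  have hslice : limsup (fun n => (X n).admissibleInf K n (1 - ε - ν) R) atTop ≤ δ :=
    (le_limNu (fun ν _ => limsup_admissibleInf_le_one _ R) hν).trans hR
  have hlarge : ∀ᶠ n : ℕ in atTop, -Real.logb K (1 - ε - ν) ≤ n * η :=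
    (tendsto_natCast_atTop_atTop.atTop_mul_const hη).eventually_ge_atTop _
  have hev : ∀ᶠ n in atTop, (X n).pr ((X n).infoTail K n (R + η))
      ≤ (ε + ν) + (X n).admissibleInf K n (1 - ε - ν) R := by
    filter_upwards [hlarge, eventually_gt_atTop 0] with n hn hn0
    have := (X n).pr_infoTail_le_add_admissibleInf (R := R) hK hn0 hη hc (by linarith) hn
    linarith
  calc limsup (fun n => (X n).pr ((X n).infoTail K n (R + η))) atTop
      ≤ limsup (fun n => (ε + ν) + (X n).admissibleInf K n (1 - ε - ν) R) atTop :=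
        limsup_le_limsup hev (isCoboundedUnder_pr _)
          (isBoundedUnder_le_add isBoundedUnder_const (isBoundedUnder_admissibleInf _ R))
    _ = (ε + ν) + limsup (fun n => (X n).admissibleInf K n (1 - ε - ν) R) atTop :=
        limsup_const_add _ _ _ (isBoundedUnder_admissibleInf _ R)
          (isCoboundedUnder_admissibleInf _ R)
    _ ≤ ε + δ + κ := by linarith [min_le_left κ ((1 - ε) / 2)]

lemma add_one_mem_gfirstRates (hK : 1 < (K : ℝ)) {ε δ R : ℝ} (hε0 : 0 ≤ ε) (hδ0 : 0 ≤ δ)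
    (hR0 : 0 ≤ R) (hR : R ∈ hbarRates K X (ε + δ)) : R + 1 ∈ gfirstRates K X ε δ := by
  refine limNu_le fun ν hν => ?_
  show limsup (fun n => (X n).admissibleInf K n (1 - ε - ν) (R + 1)) atTop ≤ δ
  have hev : ∀ᶠ n in atTop, (X n).pr ((X n).infoTail K n R) < ε + δ + ν :=
    eventually_lt_of_limsup_lt (lt_of_le_of_lt hR (by linarith)) (isBoundedUnder_pr _)
  have hrpow : Tendsto (fun n : ℕ => δ + (K : ℝ) ^ (-(n * (R + 1 / 2)))) atTop (nhds (δ + 0)) :=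
    tendsto_const_nhds.add ((tendsto_rpow_atBot_of_base_gt_one K hK).comp
      (tendsto_neg_atTop_atBot.comp (tendsto_natCast_atTop_atTop.atTop_mul_const (by linarith))))
  calc limsup (fun n => (X n).admissibleInf K n (1 - ε - ν) (R + 1)) atTop
      ≤ limsup (fun n : ℕ => δ + (K : ℝ) ^ (-(n * (R + 1 / 2)))) atTop := by
        refine limsup_le_limsup ?_ (isCoboundedUnder_admissibleInf _ _) hrpow.isBoundedUnder_le
        filter_upwards [hev, eventually_gt_atTop 0] with n hn hn0
        exact Dist.admissibleInf_le_add_rpow hK hn0 hδ0 (by linarith) (by linarith)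
    _ = δ := by rw [hrpow.limsup_eq, add_zero]

end Source

theorem statement7_general {𝒳 : Type*} (K : ℕ) (hK : 2 ≤ K) (X : Source 𝒳)
    (ε δ : ℝ) (hε0 : 0 ≤ ε) (hδ0 : 0 ≤ δ) (hεδ : ε + δ < 1) :
    Gfirst K X ε δ ≥ Hbar K X (ε + δ) := by
  have hK1 : (1 : ℝ) < K := by exact_mod_cast hK
  rw [Gfirst_eq_sInf_gfirstRates, Hbar_eq_sInf_hbarRates, ge_iff_le]
  have hnonneg : ∀ R ∈ hbarRates K X (ε + δ), 0 ≤ R := fun _ => nonneg_of_mem_hbarRates hK1 hεδ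
  rcases (gfirstRates K X ε δ).eq_empty_or_nonempty with hG | hG
  · -- both infima are then `sInf ∅ = 0`
    have hH : hbarRates K X (ε + δ) = ∅ := Set.eq_empty_of_forall_notMem fun R hR =>
      hG.subset (add_one_mem_gfirstRates hK1 hε0 hδ0 (hnonneg R hR) hR)
    rw [hG, hH]
  · exact le_csInf hG fun R hR => le_of_forall_pos_le_add fun η hη =>
      csInf_le ⟨0, hnonneg⟩ (add_mem_hbarRates hK1 hε0 (by linarith) hη hR)

/-- G_{ε,δ}(X) ≥ H̄_{ε+δ}(X). -/
theorem statement7 {𝒳 : Type*} [Countable 𝒳] (K : ℕ) (hK : 2 ≤ K) (X : Source 𝒳)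
    (ε δ : ℝ) (hε0 : 0 ≤ ε) (hε1 : ε < 1) (hδ0 : 0 ≤ δ) (hδ1 : δ < 1) (hεδ : ε + δ < 1) :
    Gfirst K X ε δ ≥ Hbar K X (ε + δ) :=
  statement7_general K hK X ε δ hε0 hδ0 hεδ
end NY
end
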